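/- arXiv:1201.3040 — 2 statements merged into one kernel-verified Lean document; each statement's English description precedes it below -/
import Mathlib

section
/- For monomial ideals K_{t,i} of R = A[ℝ≥0^d] (1 ≤ t ≤ l, 1 ≤ i ≤ m_t), the sum over t of the intersections ⋂_{i_t} K_{t,i_t} equals the intersection over all tuples (i_1,…,i_l) of the sums ∑_t K_{t,i_t}. -/
/-
A monomial ideal is determined by the monomials it contains, and sums and intersections of
monomial ideals are again monomial. A monomial lies in a sum of monomial ideals iff it lies in
one summand, so taking monomial sets turns sums into unions and intersections into
intersections; the identity is then distributivity of unions over intersections of sets.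
-/

open scoped NNReal ENNReal

/-- The semigroup ring `R = A[ℝ≥0 ^ d]`. -/
abbrev SemiRng (A : Type*) [CommRing A] (d : ℕ) : Type _ :=
  AddMonoidAlgebra A (Fin d → ℝ≥0)

/-- The monomial `X^r` of `A[ℝ≥0 ^ d]`. -/
noncomputable def mono (A : Type*) [CommRing A] {d : ℕ} (r : Fin d → ℝ≥0) : SemiRng A d :=
  AddMonoidAlgebra.single r 1

/-- An ideal of `A[ℝ≥0 ^ d]` is a monomial ideal if it is generated by a set of monomials. -/
def IsMonomialIdeal {A : Type*} [CommRing A] {d : ℕ} (I : Ideal (SemiRng A d)) : Prop :=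
  ∃ E : Set (Fin d → ℝ≥0), I = Ideal.span (mono A '' E)

/-- The set of (exponent vectors of) monomials contained in an ideal. -/
def monSet (A : Type*) [CommRing A] {d : ℕ} (I : Ideal (SemiRng A d)) :
    Set (Fin d → ℝ≥0) :=
  {r | mono A r ∈ I}

/-- `geq e r a` means `r ≥_e a`: `r ≥ a` if `e = 0` (false), `r > a` if `e = 1` (true);
no finite `r` satisfies `r ≥_e ∞`. -/
def geq (e : Bool) (r : ℝ≥0) (a : ℝ≥0∞) : Prop :=
  if e then a < (r : ℝ≥0∞) else a ≤ (r : ℝ≥0∞)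

/-- The ideal `J_{i,a,e}` generated by the pure powers `X_i^r` with `r ≥_e a`. -/
noncomputable def Jsingle (A : Type*) [CommRing A] {d : ℕ} (i : Fin d) (a : ℝ≥0∞)
    (e : Bool) : Ideal (SemiRng A d) :=
  Ideal.span {f | ∃ r : ℝ≥0, geq e r a ∧ f = mono A (Pi.single i r)}

/-- The ideal `J_{a,e}` generated by all pure powers `X_i^r` with `r ≥_{e i} a i`. -/
noncomputable def Jideal (A : Type*) [CommRing A] {d : ℕ} (a : Fin d → ℝ≥0∞)
    (e : Fin d → Bool) : Ideal (SemiRng A d) :=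
  Ideal.span {f | ∃ (i : Fin d) (r : ℝ≥0), geq (e i) r (a i) ∧ f = mono A (Pi.single i r)}

/-- The ideal `I_{a,e}` generated by all monomials `X^r` with `r i ≥_{e i} a i` for all `i`. -/
noncomputable def Iideal (A : Type*) [CommRing A] {d : ℕ} (a : Fin d → ℝ≥0∞)
    (e : Fin d → Bool) : Ideal (SemiRng A d) :=
  Ideal.span {f | ∃ r : Fin d → ℝ≥0, (∀ i, geq (e i) (r i) (a i)) ∧ f = mono A r}

/-- A monomial ideal is m-irreducible if whenever it is an intersection of two monomial
ideals, it equals one of them. -/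
def MIrred {A : Type*} [CommRing A] {d : ℕ} (I : Ideal (SemiRng A d)) : Prop :=
  ∀ J K : Ideal (SemiRng A d), IsMonomialIdeal J → IsMonomialIdeal K →
    I = J ⊓ K → I = J ∨ I = K

namespace AddMonoidAlgebra

variable {k G : Type*} [Semiring k] [AddMonoid G]

theorem mem_ideal_of_forall_of'_mem {I : Ideal (AddMonoidAlgebra k G)} {x : AddMonoidAlgebra k G}
    (h : ∀ m ∈ x.coeff.support, of' k G m ∈ I) : x ∈ I := by
  rw [← x.sum_coeff_single]
  refine Ideal.sum_mem _ fun m hm => ?_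
  simpa [of'_apply] using I.mul_mem_left (single 0 (x.coeff m)) (h m hm)

theorem of'_mem_ideal_span_of'_image_of_mem {s : Set G} {x : AddMonoidAlgebra k G} {m : G}
    (hx : x ∈ Ideal.span (of' k G '' s)) (hm : m ∈ x.coeff.support) :
    of' k G m ∈ Ideal.span (of' k G '' s) := by
  obtain ⟨m', hm', d, rfl⟩ := mem_ideal_span_of'_image.mp hx m hm
  refine mem_ideal_span_of'_image.mpr fun n hn => ⟨m', hm', d, ?_⟩
  simpa [of'_apply, coeff_single] using Finsupp.support_single_subset hn

theorem of'_mem_ideal_span_of'_image [Nontrivial k] {s : Set G} {m : G} :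
    of' k G m ∈ Ideal.span (of' k G '' s) ↔ ∃ m' ∈ s, ∃ d, m = d + m' := by
  simp [mem_ideal_span_of'_image, of'_apply, coeff_single]

end AddMonoidAlgebra

open AddMonoidAlgebra

section

variable {A : Type*} [CommRing A] {d : ℕ}

theorem mono_eq_of' : mono A = of' A (Fin d → ℝ≥0) := rfl

theorem IsMonomialIdeal.mono_mem {I : Ideal (SemiRng A d)} (hI : IsMonomialIdeal I)
    {f : SemiRng A d} (hf : f ∈ I) {r : Fin d → ℝ≥0} (hr : r ∈ f.coeff.support) : mono A r ∈ I := by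
  obtain ⟨E, rfl⟩ := hI
  rw [mono_eq_of'] at hf ⊢
  exact of'_mem_ideal_span_of'_image_of_mem hf hr

theorem eq_span_mono_monSet_of_forall {I : Ideal (SemiRng A d)}
    (h : ∀ f ∈ I, ∀ r ∈ f.coeff.support, mono A r ∈ I) :
    I = Ideal.span (mono A '' monSet A I) := by
  refine le_antisymm (fun f hf => mem_ideal_of_forall_of'_mem fun r hr => ?_) ?_
  · exact Ideal.subset_span ⟨r, h f hf r hr, rfl⟩
  · rw [Ideal.span_le]
    rintro _ ⟨r, hr, rfl⟩
    exact hr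

theorem IsMonomialIdeal.eq_of_monSet_eq {I J : Ideal (SemiRng A d)} (hI : IsMonomialIdeal I)
    (hJ : IsMonomialIdeal J) (h : monSet A I = monSet A J) : I = J := by
  rw [eq_span_mono_monSet_of_forall fun _ => hI.mono_mem,
    eq_span_mono_monSet_of_forall fun _ => hJ.mono_mem, h]

theorem IsMonomialIdeal.iInf {ι : Sort*} {K : ι → Ideal (SemiRng A d)}
    (hK : ∀ i, IsMonomialIdeal (K i)) : IsMonomialIdeal (⨅ i, K i) :=
  ⟨_, eq_span_mono_monSet_of_forall fun _ hf _ hr =>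
    Submodule.mem_iInf _ |>.mpr fun i => (hK i).mono_mem (Submodule.mem_iInf _ |>.mp hf i) hr⟩

theorem iSup_span_mono_image {ι : Sort*} (E : ι → Set (Fin d → ℝ≥0)) :
    ⨆ i, Ideal.span (mono A '' E i) = Ideal.span (mono A '' ⋃ i, E i) := by
  rw [Set.image_iUnion, Ideal.span_iUnion]

theorem IsMonomialIdeal.iSup {ι : Sort*} {K : ι → Ideal (SemiRng A d)}
    (hK : ∀ i, IsMonomialIdeal (K i)) : IsMonomialIdeal (⨆ i, K i) := by
  choose E hE using hK
  exact ⟨⋃ i, E i, (iSup_congr hE).trans (iSup_span_mono_image E)⟩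

theorem monSet_iInf {ι : Sort*} (K : ι → Ideal (SemiRng A d)) :
    monSet A (⨅ i, K i) = ⋂ i, monSet A (K i) := by
  ext r
  simp [monSet, Submodule.mem_iInf]

end

variable {A : Type*} [CommRing A] [Nontrivial A] {d : ℕ}

-- A monomial lies in a monomial ideal iff it is a multiple of one of the generators.
theorem monSet_iSup {ι : Sort*} {K : ι → Ideal (SemiRng A d)}
    (hK : ∀ i, IsMonomialIdeal (K i)) : monSet A (⨆ i, K i) = ⋃ i, monSet A (K i) := by
  choose E hE using hK
  obtain rfl : K = fun i => Ideal.span (mono A '' E i) := funext hE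
  ext r
  rw [iSup_span_mono_image]
  simp only [monSet, Set.mem_ofPred_eq, Set.mem_iUnion, mono_eq_of', of'_mem_ideal_span_of'_image]
  exact ⟨fun ⟨e, ⟨i, he⟩, hr⟩ => ⟨i, e, he, hr⟩, fun ⟨i, e, he, hr⟩ => ⟨e, ⟨i, he⟩, hr⟩⟩

theorem stmt8_general (l : ℕ) (m : Fin l → ℕ)
    (K : (t : Fin l) → Fin (m t) → Ideal (SemiRng A d))
    (hK : ∀ t i, IsMonomialIdeal (K t i)) :
    (⨆ t, ⨅ i, K t i) = ⨅ c : (t : Fin l) → Fin (m t), ⨆ t, K t (c t) := by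
  refine (IsMonomialIdeal.iSup fun t => .iInf (hK t)).eq_of_monSet_eq
    (.iInf fun c => .iSup fun t => hK t (c t)) ?_
  calc monSet A (⨆ t, ⨅ i, K t i) = ⋃ t, ⋂ i, monSet A (K t i) := by
        simp only [monSet_iSup fun t => .iInf (hK t), monSet_iInf]
    _ = ⋂ c : (t : Fin l) → Fin (m t), ⋃ t, monSet A (K t (c t)) := iSup_iInf_eq
    _ = monSet A (⨅ c : (t : Fin l) → Fin (m t), ⨆ t, K t (c t)) := by
        rw [monSet_iInf]
        exact Set.iInter_congr fun c => (monSet_iSup fun t => hK t (c t)).symm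

theorem stmt8 (l : ℕ) (m : Fin l → ℕ) (hm : ∀ t, 1 ≤ m t)
    (K : (t : Fin l) → Fin (m t) → Ideal (SemiRng A d))
    (hK : ∀ t i, IsMonomialIdeal (K t i)) :
    (⨆ t, ⨅ i, K t i) = ⨅ c : (t : Fin l) → Fin (m t), ⨆ t, K t (c t) :=
  stmt8_general l m K hK
end

section
/- Any finite sum ∑_{t=1}^k J_{i_t,α_t,ε_t} of ideals generated by pure powers of single variables has the form J_{β,δ} for some β ∈ (ℝ≥0 ∪ {∞})^d and δ ∈ {0,1}^d, hence is m-irreducible. -/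
open scoped NNReal ENNReal

variable {A : Type*} [CommRing A] [Nontrivial A] {d : ℕ}

/-!
A monomial `X^w` lies in `J_{β,δ}` exactly when `w j ≥_{δ j} β j` for some coordinate `j`.
Since this test is coordinatewise and `(u ⊔ v) j` is `u j` or `v j`, `X^(u ⊔ v) ∈ J_{β,δ}` forces
`X^u ∈ J_{β,δ}` or `X^v ∈ J_{β,δ}`; if `J_{β,δ} = J ∩ K` with monomial ideals `J, K` both strictly
larger, a generator `X^u` of `J` and a generator `X^v` of `K` outside `J_{β,δ}` contradict this.
For the sum of the `J_{i_t,α_t,ε_t}`, the exponents `r` with `X_j^r` in it form the union of the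
rays `{r ≥_{ε_t} α_t}` over the `t` with `i_t = j`; a finite union of such rays is again one
(with `β j = ∞` for the empty union).
-/

lemma geq_mono {e : Bool} {r s : ℝ≥0} {a : ℝ≥0∞} (h : geq e r a) (hrs : r ≤ s) :
    geq e s a := by
  have hrs' : (r : ℝ≥0∞) ≤ s := ENNReal.coe_le_coe.2 hrs
  cases e
  · exact le_trans (α := ℝ≥0∞) h hrs'
  · exact lt_of_lt_of_le (α := ℝ≥0∞) h hrs'

lemma geq_of_lt {e : Bool} {r : ℝ≥0} {a : ℝ≥0∞} (h : a < r) : geq e r a := by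
  cases e
  · exact h.le
  · exact h

lemma le_of_geq {e : Bool} {r : ℝ≥0} {a : ℝ≥0∞} (h : geq e r a) : a ≤ r := by
  cases e
  · exact h
  · exact le_of_lt (α := ℝ≥0∞) h

lemma not_geq_top {e : Bool} {r : ℝ≥0} : ¬ geq e r ⊤ :=
  fun h => (le_of_geq h).not_gt ENNReal.coe_lt_top

lemma geq_sup_iff {e : Bool} {r s : ℝ≥0} {a : ℝ≥0∞} :
    geq e (r ⊔ s) a ↔ geq e r a ∨ geq e s a := by
  cases e <;> simp [geq, ENNReal.coe_max]

lemma exists_geq_iff_or (a₁ a₂ : ℝ≥0∞) (e₁ e₂ : Bool) :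
    ∃ b e, ∀ r, geq e r b ↔ geq e₁ r a₁ ∨ geq e₂ r a₂ := by
  rcases lt_trichotomy a₁ a₂ with h | rfl | h
  · exact ⟨a₁, e₁, fun r =>
      ⟨Or.inl, fun h' => h'.elim id fun h₂ => geq_of_lt (h.trans_le (le_of_geq h₂))⟩⟩
  · -- at a common endpoint the union is open only if both rays are
    refine ⟨a₁, e₁ && e₂, fun r => ?_⟩
    cases e₁ <;> cases e₂ <;>
      simp [geq, or_iff_left_of_imp le_of_lt, or_iff_right_of_imp le_of_lt]
  · exact ⟨a₂, e₂, fun r =>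
      ⟨Or.inr, fun h' => h'.elim (fun h₁ => geq_of_lt (h.trans_le (le_of_geq h₁))) id⟩⟩

lemma exists_geq_iff_exists_mem {ι : Type*} (s : Finset ι) (α : ι → ℝ≥0∞) (ε : ι → Bool) :
    ∃ b e, ∀ r, geq e r b ↔ ∃ t ∈ s, geq (ε t) r (α t) := by
  classical
  induction s using Finset.induction_on with
  | empty => exact ⟨⊤, false, fun r => by simp [not_geq_top]⟩
  | insert t s _ ih =>
    obtain ⟨b, e, h⟩ := ih
    obtain ⟨b', e', h'⟩ := exists_geq_iff_or (α t) b (ε t) e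
    exact ⟨b', e', fun r => by simp [h', h]⟩

section

variable {A : Type*} [CommRing A] {d : ℕ}

lemma mono_mul (u v : Fin d → ℝ≥0) : mono A u * mono A v = mono A (u + v) := by
  simp [mono, AddMonoidAlgebra.single_mul_single]

lemma mono_mem_of_le {I : Ideal (SemiRng A d)} {u w : Fin d → ℝ≥0} (h : mono A u ∈ I)
    (huw : u ≤ w) : mono A w ∈ I := by
  rw [← tsub_add_cancel_of_le huw, ← mono_mul]
  exact I.mul_mem_left _ h

lemma mono_mem_span_iff [Nontrivial A] {E : Set (Fin d → ℝ≥0)} {w : Fin d → ℝ≥0} :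
    mono A w ∈ Ideal.span (mono A '' E) ↔ ∃ u ∈ E, u ≤ w := by
  rw [show mono A = AddMonoidAlgebra.of' A (Fin d → ℝ≥0) from rfl,
    AddMonoidAlgebra.mem_ideal_span_of'_image]
  have hsupp : (AddMonoidAlgebra.of' A (Fin d → ℝ≥0) w).coeff.support = {w} :=
    Finsupp.support_single _ one_ne_zero
  simp only [hsupp, Finset.mem_singleton, forall_eq]
  constructor
  · rintro ⟨u, hu, c, rfl⟩
    exact ⟨u, hu, le_add_self⟩
  · rintro ⟨u, hu, huw⟩
    exact ⟨u, hu, w - u, (tsub_add_cancel_of_le huw).symm⟩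

lemma mirred_of_mono_sup_mem {I : Ideal (SemiRng A d)}
    (h : ∀ u v, mono A (u ⊔ v) ∈ I → mono A u ∈ I ∨ mono A v ∈ I) : MIrred I := by
  rintro J K ⟨EJ, rfl⟩ ⟨EK, rfl⟩ hI
  rw [or_iff_not_imp_left]
  intro hJ
  obtain ⟨u, huJ, huI⟩ : ∃ u ∈ EJ, mono A u ∉ I := by
    contrapose! hJ
    refine le_antisymm (hI ▸ inf_le_left) (Ideal.span_le.2 ?_)
    rintro _ ⟨u, hu, rfl⟩
    exact hJ u hu
  refine le_antisymm (hI ▸ inf_le_right) (Ideal.span_le.2 ?_)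
  rintro _ ⟨v, hvK, rfl⟩
  have huv : mono A (u ⊔ v) ∈ I := hI ▸
    ⟨mono_mem_of_le (Ideal.subset_span ⟨u, huJ, rfl⟩) le_sup_left,
      mono_mem_of_le (Ideal.subset_span ⟨v, hvK, rfl⟩) le_sup_right⟩
  exact (h u v huv).resolve_left huI

lemma Jideal_eq_span_mono_image (a : Fin d → ℝ≥0∞) (e : Fin d → Bool) :
    Jideal A a e = Ideal.span
      (mono A '' {u | ∃ (j : Fin d) (r : ℝ≥0), geq (e j) r (a j) ∧ u = Pi.single j r}) := by
  unfold Jideal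
  congr 1
  ext f
  constructor
  · rintro ⟨j, r, h, rfl⟩
    exact ⟨Pi.single j r, ⟨j, r, h, rfl⟩, rfl⟩
  · rintro ⟨_, ⟨j, r, h, rfl⟩, rfl⟩
    exact ⟨j, r, h, rfl⟩

lemma mono_mem_Jideal_iff [Nontrivial A] {a : Fin d → ℝ≥0∞} {e : Fin d → Bool}
    {w : Fin d → ℝ≥0} : mono A w ∈ Jideal A a e ↔ ∃ j, geq (e j) (w j) (a j) := by
  rw [Jideal_eq_span_mono_image, mono_mem_span_iff]
  constructor
  · rintro ⟨_, ⟨j, r, hr, rfl⟩, hle⟩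
    exact ⟨j, geq_mono hr (by simpa using hle j)⟩
  · rintro ⟨j, hj⟩
    exact ⟨Pi.single j (w j), ⟨j, w j, hj, rfl⟩, fun l => by
      rcases eq_or_ne l j with rfl | hl <;> simp [*]⟩

lemma mirred_Jideal [Nontrivial A] (a : Fin d → ℝ≥0∞) (e : Fin d → Bool) :
    MIrred (Jideal A a e) :=
  mirred_of_mono_sup_mem fun u v huv => by
    simpa only [mono_mem_Jideal_iff, Pi.sup_apply, geq_sup_iff, exists_or] using huv

lemma iSup_Jsingle_eq_Jideal {ι : Type*} (i : ι → Fin d) (α : ι → ℝ≥0∞) (ε : ι → Bool)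
    (β : Fin d → ℝ≥0∞) (δ : Fin d → Bool)
    (h : ∀ j r, geq (δ j) r (β j) ↔ ∃ t, i t = j ∧ geq (ε t) r (α t)) :
    ⨆ t, Jsingle A (i t) (α t) (ε t) = Jideal A β δ := by
  simp only [Jsingle, Jideal, ← Ideal.span_iUnion]
  congr 1
  ext f
  simp only [Set.mem_iUnion, Set.mem_ofPred_eq]
  constructor
  · rintro ⟨t, r, hr, rfl⟩
    exact ⟨i t, r, (h (i t) r).2 ⟨t, rfl, hr⟩, rfl⟩
  · rintro ⟨j, r, hr, rfl⟩
    obtain ⟨t, rfl, ht⟩ := (h j r).1 hr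
    exact ⟨t, r, ht, rfl⟩

lemma exists_iSup_Jsingle_eq_Jideal {ι : Type*} [Fintype ι] (i : ι → Fin d) (α : ι → ℝ≥0∞)
    (ε : ι → Bool) : ∃ β δ, ⨆ t, Jsingle A (i t) (α t) (ε t) = Jideal A β δ := by
  classical
  choose β δ h using fun j => exists_geq_iff_exists_mem {t | i t = j} α ε
  exact ⟨β, δ, iSup_Jsingle_eq_Jideal i α ε β δ fun j r => by simpa using h j r⟩

end

theorem stmt16_general (k : ℕ) (i : Fin k → Fin d)
    (α : Fin k → ℝ≥0∞) (ε : Fin k → Bool) :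
    (∃ (β : Fin d → ℝ≥0∞) (δ : Fin d → Bool),
      (⨆ t, Jsingle A (i t) (α t) (ε t)) = Jideal A β δ) ∧
      MIrred (⨆ t, Jsingle A (i t) (α t) (ε t)) := by
  obtain ⟨β, δ, h⟩ := exists_iSup_Jsingle_eq_Jideal (A := A) i α ε
  exact ⟨⟨β, δ, h⟩, h ▸ mirred_Jideal β δ⟩

theorem stmt16 (k : ℕ) (hk : 1 ≤ k) (i : Fin k → Fin d)
    (α : Fin k → ℝ≥0∞) (ε : Fin k → Bool) :
    (∃ (β : Fin d → ℝ≥0∞) (δ : Fin d → Bool),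
      (⨆ t, Jsingle A (i t) (α t) (ε t)) = Jideal A β δ) ∧
      MIrred (⨆ t, Jsingle A (i t) (α t) (ε t)) :=
  stmt16_general k i α ε
end
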